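/- Fix ε. If θ* ∈ ℝⁿ is a local maximizer of the map θ ↦ Ω(θ, ε), then for every vertex w the expected degree of w under the model evaluated at θ* equals the degree of w in the input network: Σ_{u ≠ w} ρ u w = Σ_{u ≠ w} A u w. -/

import Mathlib

open Real Finset

/-!
Each summand of `Ω` depends on `θ` only through `s = θ u + θ v`, and as a function of `s` it is
`a * s + (1 - a) * log k - log (exp s + k)` with `k = (K u v) ^ ε > 0`, whose derivative is
`a - ρ`. Differentiating `Ω` in the direction of the `w`-th coordinate therefore gives
`Σ_{u ≠ w} (A u w - ρ u w)` (symmetry of `A` and `K` folds the pairs `u < w` and `w < u`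
together), and this vanishes at a local maximum.
-/

/-- Edge probability of the spatial core-periphery model:
`ρ u v = exp (θ u + θ v) / (exp (θ u + θ v) + (K u v) ^ ε)`. -/
noncomputable def edgeProb {n : ℕ} (K : Fin n → Fin n → ℝ) (θ : Fin n → ℝ) (ε : ℝ)
    (u v : Fin n) : ℝ :=
  exp (θ u + θ v) / (exp (θ u + θ v) + (K u v) ^ ε)

/-- Log-likelihood `Ω(θ, ε) = Σ_{u < v} [A u v * log ρ u v + (1 - A u v) * log (1 - ρ u v)]`. -/
noncomputable def logLik {n : ℕ} (A K : Fin n → Fin n → ℝ) (θ : Fin n → ℝ) (ε : ℝ) : ℝ :=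
  ∑ p ∈ univ.filter (fun p : Fin n × Fin n => p.1 < p.2),
    (A p.1 p.2 * log (edgeProb K θ ε p.1 p.2) +
      (1 - A p.1 p.2) * log (1 - edgeProb K θ ε p.1 p.2))

noncomputable def bernoulliLogitLogLik (a k s : ℝ) : ℝ :=
  a * log (exp s / (exp s + k)) + (1 - a) * log (1 - exp s / (exp s + k))

lemma bernoulliLogitLogLik_eq {a k : ℝ} (hk : 0 < k) (s : ℝ) :
    bernoulliLogitLogLik a k s = a * s + (1 - a) * log k - log (exp s + k) := by
  have hd : 0 < exp s + k := by positivity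
  have h1 : 1 - exp s / (exp s + k) = k / (exp s + k) := by field_simp; ring
  rw [bernoulliLogitLogLik, h1, log_div (exp_ne_zero s) hd.ne', log_div hk.ne' hd.ne', log_exp]
  ring

lemma hasDerivAt_bernoulliLogitLogLik {a k : ℝ} (hk : 0 < k) (s : ℝ) :
    HasDerivAt (bernoulliLogitLogLik a k) (a - exp s / (exp s + k)) s := by
  have hd : exp s + k ≠ 0 := by positivity
  rw [funext (bernoulliLogitLogLik_eq hk)]
  exact ((((hasDerivAt_id' s).const_mul a).add_const ((1 - a) * log k)).fun_sub
    (((hasDerivAt_exp s).add_const k).log hd)).congr_deriv (by ring)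

lemma logLik_eq_sum {n : ℕ} (A K : Fin n → Fin n → ℝ) (θ : Fin n → ℝ) (ε : ℝ) :
    logLik A K θ ε = ∑ p ∈ univ.filter (fun p : Fin n × Fin n => p.1 < p.2),
      bernoulliLogitLogLik (A p.1 p.2) (K p.1 p.2 ^ ε) (θ p.1 + θ p.2) := rfl

lemma hasDerivAt_logLik_add_smul {n : ℕ} (A : Fin n → Fin n → ℝ) {K : Fin n → Fin n → ℝ}
    (hKpos : ∀ u v : Fin n, u ≠ v → 0 < K u v) (ε : ℝ) (θ d : Fin n → ℝ) :
    HasDerivAt (fun t : ℝ => logLik A K (θ + t • d) ε)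
      (∑ p ∈ univ.filter (fun p : Fin n × Fin n => p.1 < p.2),
        (d p.1 + d p.2) * (A p.1 p.2 - edgeProb K θ ε p.1 p.2)) 0 := by
  simp_rw [logLik_eq_sum]
  refine HasDerivAt.fun_sum fun p hp => ?_
  have hk : 0 < K p.1 p.2 ^ ε := rpow_pos_of_pos (hKpos _ _ (mem_filter.1 hp).2.ne) ε
  have hline : HasDerivAt (fun t : ℝ => (θ + t • d) p.1 + (θ + t • d) p.2) (d p.1 + d p.2) 0 := by
    simp only [Pi.add_apply, Pi.smul_apply, smul_eq_mul]
    exact ((hasDerivAt_mul_const _).const_add _).fun_add ((hasDerivAt_mul_const _).const_add _)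
  have hg := hasDerivAt_bernoulliLogitLogLik (a := A p.1 p.2) hk (θ p.1 + θ p.2)
  exact (hg.comp_of_eq 0 hline (by simp)).congr_deriv (by rw [edgeProb]; ring)

lemma sum_lt_add_mul_eq_sum_mul_sum_ne {α R : Type*} [Fintype α] [LinearOrder α] [CommSemiring R]
    (F : α → α → R) (hF : ∀ u v, F u v = F v u) (d : α → R) :
    ∑ p ∈ univ.filter (fun p : α × α => p.1 < p.2), (d p.1 + d p.2) * F p.1 p.2 =
      ∑ u, d u * ∑ v ∈ univ.filter (· ≠ u), F v u := by
  have hsplit : ∀ u, ∑ v ∈ univ.filter (· ≠ u), F v u =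
      ∑ v ∈ univ.filter (u < ·), F u v + ∑ v ∈ univ.filter (· < u), F v u := by
    intro u
    rw [sum_filter, sum_filter, sum_filter, ← sum_add_distrib]
    refine sum_congr rfl fun v _ => ?_
    rcases lt_trichotomy v u with h | rfl | h
    · simp [h, h.ne, not_lt_of_gt h]
    · simp
    · simp [h, h.ne', not_lt_of_gt h, hF v u]
  simp only [hsplit, mul_add, sum_add_distrib, add_mul, sum_filter, Fintype.sum_prod_type,
    mul_sum, mul_ite, mul_zero]
  exact congrArg _ sum_comm

lemma edgeProb_comm {n : ℕ} {K : Fin n → Fin n → ℝ} (hKsymm : ∀ u v, K u v = K v u)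
    (θ : Fin n → ℝ) (ε : ℝ) (u v : Fin n) : edgeProb K θ ε u v = edgeProb K θ ε v u := by
  simp only [edgeProb, hKsymm u v, add_comm (θ u)]

theorem expected_degree_eq_degree_of_isLocalMax_general
    (n : ℕ) (A K : Fin n → Fin n → ℝ)
    (hAsymm : ∀ u v, A u v = A v u)
    (hKsymm : ∀ u v, K u v = K v u) (hKpos : ∀ u v : Fin n, u ≠ v → 0 < K u v)
    (ε : ℝ) (θ : Fin n → ℝ)
    (hmax : IsLocalMax (fun θ : Fin n → ℝ => logLik A K θ ε) θ) :
    ∀ w : Fin n,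
      ∑ u ∈ univ.filter (· ≠ w), edgeProb K θ ε u w =
        ∑ u ∈ univ.filter (· ≠ w), A u w := by
  intro w
  set d : Fin n → ℝ := Pi.single w 1
  have hline : IsLocalMax (fun t : ℝ => logLik A K (θ + t • d) ε) 0 := by
    refine IsLocalMax.comp_continuous (f := fun θ => logLik A K θ ε) ?_ (by fun_prop)
    rwa [zero_smul, add_zero]
  have hcrit := hline.hasDerivAt_eq_zero (hasDerivAt_logLik_add_smul A hKpos ε θ d)
  rw [sum_lt_add_mul_eq_sum_mul_sum_ne (fun u v => A u v - edgeProb K θ ε u v)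
    (fun u v => by rw [hAsymm, edgeProb_comm hKsymm])] at hcrit
  simp only [d, Pi.single_apply, ite_mul, one_mul, zero_mul, sum_ite_eq', mem_univ, if_true,
    sum_sub_distrib] at hcrit
  linarith

/-- Fix `ε`. If `θ*` is a local maximizer of `θ ↦ Ω(θ, ε)`, then for every vertex `w` the
expected degree of `w` under the model evaluated at `θ*` equals the degree of `w` in the
input network: `Σ_{u ≠ w} ρ u w = Σ_{u ≠ w} A u w`. -/
theorem expected_degree_eq_degree_of_isLocalMax
    (n : ℕ) (A K : Fin n → Fin n → ℝ)
    (hA : ∀ u v, A u v = 0 ∨ A u v = 1) (hAsymm : ∀ u v, A u v = A v u)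
    (hAdiag : ∀ u, A u u = 0)
    (hKsymm : ∀ u v, K u v = K v u) (hKpos : ∀ u v : Fin n, u ≠ v → 0 < K u v)
    (ε : ℝ) (θ : Fin n → ℝ)
    (hmax : IsLocalMax (fun θ : Fin n → ℝ => logLik A K θ ε) θ) :
    ∀ w : Fin n,
      ∑ u ∈ univ.filter (· ≠ w), edgeProb K θ ε u w =
        ∑ u ∈ univ.filter (· ≠ w), A u w :=
  expected_degree_eq_degree_of_isLocalMax_general n A K hAsymm hKsymm hKpos ε θ hmax
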